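/- arXiv:1710.04233 — 4 statements merged into one kernel-verified Lean document; each statement's English description precedes it below -/
import Mathlib

section
/- Let (X,d) be a metric space and μ a Borel measure on X that is finite on every bounded Borel set and positive on every nonempty open set, and let 1 ≤ p < ∞. If there is a constant C > 0 such that for every r > 0 and every f ∈ L^p(μ) one has ‖A_r f‖_{L^p(μ)} ≤ C ‖f‖_{L^p(μ)}, then for every f ∈ L^p(μ) the averages A_r f converge to f in L^p(μ) as r → 0. -/
open MeasureTheory Metric Filter Topology ENNReal

/-- The averaging operator `A_r f(x) = (1/μ(B^cl(x,r))) ∫_{B^cl(x,r)} f dμ`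
over closed balls. -/
noncomputable def avgOp {X : Type*} [MetricSpace X] [MeasurableSpace X]
    (μ : Measure X) (r : ℝ) (f : X → ℝ) (x : X) : ℝ :=
  (μ (closedBall x r)).toReal⁻¹ * ∫ y in closedBall x r, f y ∂μ

/-
Uniform boundedness reduces the claim to a dense class: for any `g`,
`‖A_r f - f‖ ≤ C ‖f - g‖ + ‖A_r g - g‖ + ‖f - g‖`. Measures finite on bounded sets of a metric
space are weakly regular, so bounded continuous functions are dense in `L^p`, and multiplying
them by Urysohn cutoffs keeps this true for those with bounded support. For such a `g`,
`A_r g → g` pointwise because every ball has positive measure, and `|A_r g - g|` is bounded by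
`2 ‖g‖` times the indicator of the `1`-neighbourhood of the support of `g`, so dominated
convergence gives `A_r g → g` in `L^p`.
-/

open BoundedContinuousFunction Bornology Set Function

theorem tendsto_eLpNorm_of_dominated {α E ι : Type*} [MeasurableSpace α] {μ : Measure α}
    [NormedAddCommGroup E] {p : ℝ≥0∞} (hp : p ≠ ∞) {l : Filter ι} [l.IsCountablyGenerated]
    {F : ι → α → E} {G : α → ℝ} (hF : ∀ᶠ i in l, AEStronglyMeasurable (F i) μ)
    (hG : MemLp G p μ) (hFG : ∀ᶠ i in l, ∀ᵐ x ∂μ, ‖F i x‖ ≤ G x)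
    (hlim : ∀ᵐ x ∂μ, Tendsto (fun i => F i x) l (𝓝 0)) :
    Tendsto (fun i => eLpNorm (F i) p μ) l (𝓝 0) := by
  rcases eq_or_ne p 0 with rfl | hp₀
  · simpa using tendsto_const_nhds
  have hp_pos : 0 < p.toReal := ENNReal.toReal_pos hp₀ hp
  have hrpow : ∀ q : ℝ, 0 < q → Tendsto (fun t : ℝ≥0∞ => t ^ q) (𝓝 0) (𝓝 0) := fun q hq =>
    ENNReal.continuous_rpow_const.tendsto' 0 0 (ENNReal.zero_rpow_of_pos hq)
  have hint : Tendsto (fun i => ∫⁻ x, ‖F i x‖ₑ ^ p.toReal ∂μ) l (𝓝 0) := by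
    rw [← lintegral_zero]
    refine tendsto_lintegral_filter_of_dominated_convergence' (fun x => ‖G x‖ₑ ^ p.toReal)
      (hF.mono fun i hi => hi.enorm.pow_const _)
      (hFG.mono fun i hi => hi.mono fun x hx => ?_)
      (lintegral_rpow_enorm_lt_top_of_eLpNorm_lt_top hp₀ hp hG.2).ne
      (hlim.mono fun x hx => (hrpow _ hp_pos).comp (by simpa using hx.enorm))
    exact ENNReal.rpow_le_rpow (enorm_le_iff_norm_le.2 (hx.trans (Real.le_norm_self _))) hp_pos.le
  simp_rw [eLpNorm_eq_lintegral_rpow_enorm_toReal hp₀ hp]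
  exact (hrpow _ (one_div_pos.2 hp_pos)).comp hint

theorem ENNReal.tendsto_nhds_zero_of_forall_le_mul_add {ι : Type*} {l : Filter ι}
    {a : ι → ℝ≥0∞} {K : ℝ≥0∞} (hK : K ≠ ∞)
    (h : ∀ δ : ℝ≥0∞, 0 < δ → ∃ b : ι → ℝ≥0∞, Tendsto b l (𝓝 0) ∧ ∀ᶠ i in l, a i ≤ K * δ + b i) :
    Tendsto a l (𝓝 0) := by
  rw [ENNReal.tendsto_nhds_zero]
  intro ε hε
  obtain ⟨δ, hδ, hKδ⟩ := ENNReal.exists_nnreal_pos_mul_lt hK (ENNReal.half_pos hε.ne').ne'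
  obtain ⟨b, hb, hab⟩ := h δ (ENNReal.coe_pos.2 hδ)
  filter_upwards [hab, ENNReal.tendsto_nhds_zero.1 hb _ (ENNReal.half_pos hε.ne')] with i hai hbi
  calc a i ≤ K * δ + b i := hai
    _ ≤ ε / 2 + ε / 2 := by rw [mul_comm]; gcongr
    _ = ε := ENNReal.add_halves ε

theorem MeasureTheory.MemLp.integrableOn_of_measure_ne_top {α E : Type*} [MeasurableSpace α]
    {μ : Measure α} [NormedAddCommGroup E] {p : ℝ≥0∞} (hp : 1 ≤ p) {f : α → E}
    (hf : MemLp f p μ) {s : Set α} (hs : μ s ≠ ∞) : IntegrableOn f s μ :=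
  have : Fact (μ s < ∞) := ⟨hs.lt_top⟩
  (hf.restrict s).integrable hp

section

variable {X : Type*} [MetricSpace X] [MeasurableSpace X] {μ : Measure X}

theorem avgOp_sub {f g : X → ℝ} {x : X} {r : ℝ} (hf : IntegrableOn f (closedBall x r) μ)
    (hg : IntegrableOn g (closedBall x r) μ) :
    avgOp μ r (fun y => f y - g y) x = avgOp μ r f x - avgOp μ r g x := by
  rw [avgOp, avgOp, avgOp, integral_sub hf hg, mul_sub]

theorem abs_avgOp_sub_le {g : X → ℝ} {x : X} {r c ε : ℝ} (hμ₀ : μ (closedBall x r) ≠ 0)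
    (hμ : μ (closedBall x r) ≠ ∞) (hg : IntegrableOn g (closedBall x r) μ)
    (hgc : ∀ y ∈ closedBall x r, |g y - c| ≤ ε) : |avgOp μ r g x - c| ≤ ε := by
  have hpos : 0 < μ.real (closedBall x r) := ENNReal.toReal_pos hμ₀ hμ
  have hint : ‖∫ y in closedBall x r, (g y - c) ∂μ‖ ≤ ε * μ.real (closedBall x r) :=
    norm_setIntegral_le_of_norm_le_const hμ.lt_top hgc
  have hsub : avgOp μ r g x - c =
      (μ.real (closedBall x r))⁻¹ * ∫ y in closedBall x r, (g y - c) ∂μ := by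
    rw [integral_sub hg (integrableOn_const hμ), setIntegral_const, smul_eq_mul, avgOp,
      ← measureReal_def]
    field_simp
  rw [hsub, abs_mul, abs_of_pos (inv_pos.2 hpos), inv_mul_le_iff₀ hpos, mul_comm]
  exact hint

theorem tendsto_avgOp_of_continuousAt [μ.IsOpenPosMeasure] {x : X}
    (hμ : ∀ R, μ (closedBall x R) ≠ ∞) {g : X → ℝ} (hg : ∀ R, IntegrableOn g (closedBall x R) μ)
    (hgx : ContinuousAt g x) :
    Tendsto (fun r => avgOp μ r g x) (𝓝[>] 0) (𝓝 (g x)) := by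
  rw [Metric.tendsto_nhds]
  intro ε hε
  obtain ⟨δ, hδ, hgδ⟩ := Metric.continuousAt_iff.1 hgx (ε / 2) (half_pos hε)
  filter_upwards [Ioo_mem_nhdsGT hδ] with r ⟨hr₀, hrδ⟩
  refine lt_of_le_of_lt (abs_avgOp_sub_le (measure_closedBall_pos μ x hr₀).ne' (hμ r) (hg r)
    fun y hy => (hgδ ((mem_closedBall.1 hy).trans_lt hrδ)).le) (half_lt_self hε)

variable [BorelSpace X]

theorem upperSemicontinuous_measure_closedBall (ν : Measure X)
    (hν : ∀ x R, ν (closedBall x R) ≠ ∞) (r : ℝ) :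
    UpperSemicontinuous fun x => ν (closedBall x r) := by
  intro x c hc
  have hlim : Tendsto (fun R => ν (closedBall x R)) (𝓝[>] r) (𝓝 (ν (closedBall x r))) := by
    rw [← biInter_gt_closedBall]
    exact tendsto_measure_biInter_gt (fun _ _ => measurableSet_closedBall.nullMeasurableSet)
      (fun _ _ _ hij => closedBall_subset_closedBall hij) ⟨r + 1, by linarith, hν x _⟩
  obtain ⟨R, hRc, hR⟩ := ((hlim.eventually (gt_mem_nhds hc)).and self_mem_nhdsWithin).exists
  filter_upwards [ball_mem_nhds x (sub_pos.2 hR)] with x' hx'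
  refine lt_of_le_of_lt (measure_mono (closedBall_subset_closedBall' ?_)) hRc
  linarith [mem_ball.1 hx']

theorem measurable_setIntegral_closedBall {f : X → ℝ}
    (hf : ∀ x R, IntegrableOn f (closedBall x R) μ) (r : ℝ) :
    Measurable fun x => ∫ y in closedBall x r, f y ∂μ := by
  have hmeas : ∀ g : X → ℝ, (∀ x R, IntegrableOn g (closedBall x R) μ) →
      Measurable fun x => (∫⁻ y in closedBall x r, ENNReal.ofReal (g y) ∂μ).toReal := by
    intro g hg
    simp_rw [← withDensity_apply _ measurableSet_closedBall]
    refine (upperSemicontinuous_measure_closedBall _ (fun x R => ?_) r).measurable.ennreal_toReal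
    rw [withDensity_apply _ measurableSet_closedBall]
    exact (hg x R).lintegral_lt_top.ne
  simp_rw [integral_eq_lintegral_pos_part_sub_lintegral_neg_part (hf _ r)]
  exact (hmeas f hf).sub (hmeas (fun y => -f y) fun x R => (hf x R).neg)

theorem measurable_avgOp (hμ : ∀ x R, μ (closedBall x R) ≠ ∞) {f : X → ℝ}
    (hf : ∀ x R, IntegrableOn f (closedBall x R) μ) (r : ℝ) :
    Measurable (avgOp μ r f) :=
  (upperSemicontinuous_measure_closedBall μ hμ r).measurable.ennreal_toReal.inv.mul
    (measurable_setIntegral_closedBall hf r)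

theorem eLpNorm_avgOp_sub_self_le (hμ : ∀ x R, μ (closedBall x R) ≠ ∞) {p : ℝ≥0∞} (hp : 1 ≤ p)
    {f g : X → ℝ} (hf : ∀ x R, IntegrableOn f (closedBall x R) μ)
    (hg : ∀ x R, IntegrableOn g (closedBall x R) μ) (hfm : AEStronglyMeasurable f μ)
    (hgm : AEStronglyMeasurable g μ) (r : ℝ) :
    eLpNorm (fun x => avgOp μ r f x - f x) p μ ≤
      eLpNorm (avgOp μ r fun y => f y - g y) p μ +
        eLpNorm (fun x => avgOp μ r g x - g x) p μ + eLpNorm (f - g) p μ := by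
  have hdecomp : (fun x => avgOp μ r f x - f x) =
      (avgOp μ r (fun y => f y - g y) + fun x => avgOp μ r g x - g x) - (f - g) := by
    ext x
    simp only [Pi.add_apply, Pi.sub_apply, avgOp_sub (hf x r) (hg x r)]
    ring
  have hAfg : AEStronglyMeasurable (avgOp μ r fun y => f y - g y) μ :=
    (measurable_avgOp hμ (fun x R => (hf x R).sub (hg x R)) r).aestronglyMeasurable
  have hAg := (measurable_avgOp hμ hg r).aestronglyMeasurable.sub hgm
  rw [hdecomp]
  refine (eLpNorm_sub_le (hAfg.add hAg) (hfm.sub hgm) hp).trans ?_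
  gcongr
  exact eLpNorm_add_le hAfg hAg hp

theorem tendsto_eLpNorm_avgOp_sub_self [μ.IsOpenPosMeasure]
    (hμ : ∀ s, IsBounded s → μ s < ∞) {p : ℝ≥0∞} (hp : p ≠ ∞) (g : X →ᵇ ℝ)
    (hg : IsBounded (support g)) :
    Tendsto (fun r => eLpNorm (fun x => avgOp μ r g x - g x) p μ) (𝓝[>] 0) (𝓝 0) := by
  set K := cthickening 1 (support g)
  have hball : ∀ x R, μ (closedBall x R) ≠ ∞ := fun x R => (hμ _ isBounded_closedBall).ne
  have hint : ∀ x R, IntegrableOn g (closedBall x R) μ := fun x R =>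
    Measure.integrableOn_of_bounded (hball x R) g.continuous.aestronglyMeasurable
      (ae_of_all _ g.norm_coe_le_norm)
  refine tendsto_eLpNorm_of_dominated hp (G := K.indicator fun _ => 2 * ‖g‖)
    (Eventually.of_forall fun r =>
      ((measurable_avgOp hball hint r).sub g.continuous.measurable).aestronglyMeasurable)
    (memLp_indicator_const p isClosed_cthickening.measurableSet _
      (Or.inr (hμ _ hg.cthickening).ne))
    ?_ (ae_of_all _ fun x => by
      simpa using ((tendsto_avgOp_of_continuousAt (hball x) (hint x)
        g.continuous.continuousAt).sub_const (g x)))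
  filter_upwards [Ioc_mem_nhdsGT zero_lt_one] with r ⟨hr₀, hr₁⟩
  refine ae_of_all _ fun x => ?_
  have hμ₀ := (measure_closedBall_pos μ x hr₀).ne'
  by_cases hx : x ∈ K
  · have havg : |avgOp μ r g x - 0| ≤ ‖g‖ := abs_avgOp_sub_le hμ₀ (hball x r) (hint x r)
      fun y _ => by simpa using g.norm_coe_le_norm y
    rw [sub_zero] at havg
    rw [indicator_of_mem hx, Real.norm_eq_abs]
    calc |avgOp μ r g x - g x| ≤ |avgOp μ r g x| + |g x| := abs_sub _ _
      _ ≤ ‖g‖ + ‖g‖ := add_le_add havg (g.norm_coe_le_norm x)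
      _ = 2 * ‖g‖ := by ring
  · have hzero : ∀ y ∈ closedBall x r, g y = 0 := fun y hy => by
      by_contra hgy
      exact hx (mem_cthickening_of_dist_le x y 1 _ hgy ((mem_closedBall'.1 hy).trans hr₁))
    have havg : |avgOp μ r g x - 0| ≤ 0 := abs_avgOp_sub_le hμ₀ (hball x r) (hint x r)
      fun y hy => by simp [hzero y hy]
    rw [indicator_of_notMem hx, hzero x (mem_closedBall_self hr₀.le)]
    simpa using havg

theorem MeasureTheory.Measure.weaklyRegular_of_isBounded_lt_top
    (hμ : ∀ s, IsBounded s → μ s < ∞) : μ.WeaklyRegular := by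
  rcases isEmpty_or_nonempty X with hX | ⟨⟨x₀⟩⟩
  · have : IsFiniteMeasure μ := ⟨by simp [univ_eq_empty_iff.2 hX]⟩
    infer_instance
  have : μ.OuterRegular := by
    refine Measure.OuterRegular.of_restrict (s := fun n : ℕ => ball x₀ n) (fun n => ?_)
      (fun n => isOpen_ball) (fun x _ => ?_)
    · have : IsFiniteMeasure (μ.restrict (ball x₀ n)) :=
        isFiniteMeasure_restrict.2 (hμ _ isBounded_ball).ne
      infer_instance
    · obtain ⟨n, hn⟩ := exists_nat_gt (dist x x₀)
      exact mem_iUnion.2 ⟨n, hn⟩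
  exact ⟨Measure.InnerRegularWRT.of_pseudoMetrizableSpace μ⟩

theorem BoundedContinuousFunction.exists_isBounded_support_eLpNorm_sub_le {p : ℝ≥0∞}
    (hp : p ≠ ∞) (g₀ : X →ᵇ ℝ) (hg₀ : MemLp g₀ p μ) {ε : ℝ≥0∞} (hε : 0 < ε) :
    ∃ g : X →ᵇ ℝ, IsBounded (support g) ∧ eLpNorm (⇑g₀ - ⇑g) p μ ≤ ε ∧ MemLp g p μ := by
  rcases isEmpty_or_nonempty X with hX | ⟨⟨x₀⟩⟩
  · exact ⟨0, by simp, by simp, by simp⟩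
  have hcutoff (n : ℕ) : ∃ χ : X →ᵇ ℝ,
      EqOn χ 0 (ball x₀ (n + 1))ᶜ ∧ EqOn χ 1 (closedBall x₀ n) ∧ ∀ x, χ x ∈ Icc (0 : ℝ) 1 :=
    exists_bounded_zero_one_of_closed isOpen_ball.isClosed_compl isClosed_closedBall
      (disjoint_compl_left_iff_subset.2 (closedBall_subset_ball (lt_add_one _)))
  choose χ hχ₀ hχ₁ hχI using hcutoff
  have hnorm {a t : ℝ} (ht : t ∈ Icc (0 : ℝ) 1) : ‖a * t‖ ≤ ‖a‖ := by
    rw [norm_mul]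
    exact mul_le_of_le_one_right (norm_nonneg _) (abs_le.2 ⟨by linarith [ht.1], ht.2⟩)
  have hlim : Tendsto (fun n => eLpNorm (⇑g₀ - ⇑(g₀ * χ n)) p μ) atTop (𝓝 0) := by
    refine tendsto_eLpNorm_of_dominated hp (G := fun x => ‖g₀ x‖)
      (Eventually.of_forall fun n =>
        (g₀.continuous.sub (g₀ * χ n).continuous).aestronglyMeasurable) hg₀.norm
      (Eventually.of_forall fun n => ae_of_all _ fun x => ?_) (ae_of_all _ fun x => ?_)
    · have h1 : 1 - χ n x ∈ Icc (0 : ℝ) 1 :=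
        ⟨by linarith [(hχI n x).2], by linarith [(hχI n x).1]⟩
      simpa [mul_sub] using hnorm (a := g₀ x) h1
    · refine tendsto_const_nhds.congr' ?_
      filter_upwards [eventually_ge_atTop ⌈dist x x₀⌉₊] with n hn
      simp [hχ₁ n (Nat.ceil_le.1 hn : x ∈ closedBall x₀ n)]
  obtain ⟨n, hn⟩ := (ENNReal.tendsto_nhds_zero.1 hlim ε hε).exists
  refine ⟨g₀ * χ n, (isBounded_ball (x := x₀) (r := n + 1)).subset fun x hx => ?_, hn, ?_⟩
  · by_contra hx'
    simp [hχ₀ n hx'] at hx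
  · exact hg₀.of_le (g₀ * χ n).continuous.aestronglyMeasurable
      (ae_of_all _ fun x => hnorm (hχI n x))

theorem MeasureTheory.MemLp.exists_boundedContinuous_isBounded_support_eLpNorm_sub_le
    (hμ : ∀ s, IsBounded s → μ s < ∞) {p : ℝ≥0∞} (hp : p ≠ ∞) {f : X → ℝ} (hf : MemLp f p μ)
    {ε : ℝ≥0∞} (hε : ε ≠ 0) :
    ∃ g : X →ᵇ ℝ, IsBounded (support g) ∧ eLpNorm (f - ⇑g) p μ ≤ ε ∧ MemLp g p μ := by
  have := μ.weaklyRegular_of_isBounded_lt_top hμ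
  obtain ⟨η, hη, hadd⟩ := exists_Lp_half ℝ μ p hε
  obtain ⟨g₀, hfg₀, hg₀⟩ := hf.exists_boundedContinuous_eLpNorm_sub_le hp hη.ne'
  obtain ⟨g, hg_supp, hg₀g, hg⟩ := g₀.exists_isBounded_support_eLpNorm_sub_le hp hg₀ hη
  refine ⟨g, hg_supp, ?_, hg⟩
  have := hadd _ _ (hf.1.sub hg₀.1) (hg₀.1.sub hg.1) hfg₀ hg₀g
  rw [sub_add_sub_cancel] at this
  exact this.le

end

theorem stmt0_general {X : Type*} [MetricSpace X] [MeasurableSpace X] [BorelSpace X]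
    (μ : Measure X)
    (hfin : ∀ s : Set X, Bornology.IsBounded s → μ s < ⊤)
    (hpos : ∀ U : Set X, IsOpen U → U.Nonempty → 0 < μ U)
    (p : ℝ≥0∞) (hp1 : 1 ≤ p) (hp2 : p ≠ ⊤)
    (C : ℝ)
    (hbd : ∀ r : ℝ, 0 < r → ∀ f : X → ℝ, MemLp f p μ →
      eLpNorm (avgOp μ r f) p μ ≤ ENNReal.ofReal C * eLpNorm f p μ) :
    ∀ f : X → ℝ, MemLp f p μ →
      Tendsto (fun r : ℝ => eLpNorm (fun x => avgOp μ r f x - f x) p μ)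
        (𝓝[>] (0 : ℝ)) (𝓝 0) := by
  intro f hf
  have : μ.IsOpenPosMeasure := ⟨fun U hU hne => (hpos U hU hne).ne'⟩
  have hball (x : X) (R : ℝ) : μ (closedBall x R) ≠ ∞ := (hfin _ isBounded_closedBall).ne
  have hint {h : X → ℝ} (hh : MemLp h p μ) (x : X) (R : ℝ) : IntegrableOn h (closedBall x R) μ :=
    hh.integrableOn_of_measure_ne_top hp1 (hball x R)
  refine ENNReal.tendsto_nhds_zero_of_forall_le_mul_add (K := ENNReal.ofReal C + 1)
    (by finiteness) fun δ hδ => ?_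
  obtain ⟨g, hg_supp, hfg, hg⟩ :=
    hf.exists_boundedContinuous_isBounded_support_eLpNorm_sub_le hfin hp2 hδ.ne'
  refine ⟨_, tendsto_eLpNorm_avgOp_sub_self hfin hp2 g hg_supp, ?_⟩
  filter_upwards [self_mem_nhdsWithin] with r (hr : 0 < r)
  calc eLpNorm (fun x => avgOp μ r f x - f x) p μ
      ≤ eLpNorm (avgOp μ r fun y => f y - g y) p μ +
          eLpNorm (fun x => avgOp μ r g x - g x) p μ + eLpNorm (f - ⇑g) p μ :=
        eLpNorm_avgOp_sub_self_le hball hp1 (hint hf) (hint hg) hf.1 hg.1 r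
    _ ≤ ENNReal.ofReal C * δ + eLpNorm (fun x => avgOp μ r g x - g x) p μ + δ := by
        gcongr
        exact (hbd r hr _ (hf.sub hg)).trans (by gcongr)
    _ = (ENNReal.ofReal C + 1) * δ + eLpNorm (fun x => avgOp μ r g x - g x) p μ := by ring

/-- If the averaging operators `A_r` are uniformly bounded on `L^p(μ)`, `1 ≤ p < ∞`,
then for every `f ∈ L^p(μ)` the averages `A_r f` converge to `f` in `L^p(μ)` as `r → 0`. -/
theorem stmt0 {X : Type*} [MetricSpace X] [MeasurableSpace X] [BorelSpace X]
    (μ : Measure X)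
    (hfin : ∀ s : Set X, Bornology.IsBounded s → μ s < ⊤)
    (hpos : ∀ U : Set X, IsOpen U → U.Nonempty → 0 < μ U)
    (p : ℝ≥0∞) (hp1 : 1 ≤ p) (hp2 : p ≠ ⊤)
    (C : ℝ) (hC : 0 < C)
    (hbd : ∀ r : ℝ, 0 < r → ∀ f : X → ℝ, MemLp f p μ →
      eLpNorm (avgOp μ r f) p μ ≤ ENNReal.ofReal C * eLpNorm f p μ) :
    ∀ f : X → ℝ, MemLp f p μ →
      Tendsto (fun r : ℝ => eLpNorm (fun x => avgOp μ r f x - f x) p μ)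
        (𝓝[>] (0 : ℝ)) (𝓝 0) :=
  stmt0_general μ hfin hpos p hp1 hp2 C hbd
end

section
/- Let (X,d) be a metric space and μ a Borel measure on X that is finite on every bounded Borel set and positive on every nonempty open set, and let s > 0. If the conjugate function a_s is essentially bounded, then for every f ∈ L^1(μ) one has ‖A_s f‖_{L^1(μ)} ≤ ‖a_s‖_{L^∞(μ)} · ‖f‖_{L^1(μ)}. -/
/-!
Since `|A_s f| ≤ A_s |f|` pointwise and the relation `d(x, y) ≤ s` is symmetric, Tonelli's
theorem turns `∫ A_s |f| dμ` into `∫ |f| a_s dμ ≤ ‖a_s‖_∞ ‖f‖₁`. Tonelli requires the joint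
measurability of `(x, y) ↦ 1_{d(x,y) ≤ s} / μ(B^cl(x,s))`, which holds because `X` is second
countable: the balls of radius `ε/2` around a maximal `ε`-separated set are disjoint and have
positive measure, so under σ-finiteness such a set is countable, and it is an `ε`-net.
-/

open MeasureTheory Metric ENNReal

/-- The conjugate function `a_s(y) = ∫_X 1_{B^cl(y,s)}(x) / μ(B^cl(x,s)) dμ(x)`. -/
noncomputable def conjFn {X : Type*} [MetricSpace X] [MeasurableSpace X]
    (μ : Measure X) (s : ℝ) (y : X) : ℝ≥0∞ :=
  ∫⁻ x in closedBall y s, (μ (closedBall x s))⁻¹ ∂μ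

open scoped NNReal Function

namespace Metric

variable {X : Type*}

theorem exists_isSeparated_isCover [PseudoEMetricSpace X] (ε : ℝ≥0) (s : Set X) :
    ∃ N ⊆ s, IsSeparated ε N ∧ IsCover ε s N := by
  obtain ⟨N, hN⟩ := zorn_subset {N : Set X | N ⊆ s ∧ IsSeparated ε N} fun c hc hchain =>
    ⟨⋃₀ c, ⟨Set.sUnion_subset fun t ht => (hc ht).1, fun x ⟨t, ht, hxt⟩ y ⟨u, hu, hyu⟩ hxy =>
      (hchain.total ht hu).elim (fun htu => (hc hu).2 (htu hxt) hyu hxy)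
        (fun hut => (hc ht).2 hxt (hut hyu) hxy)⟩,
      fun _ => Set.subset_sUnion_of_mem⟩
  exact ⟨N, hN.prop.1, hN.prop.2, .of_maximal_isSeparated hN⟩

theorem IsSeparated.countable_of_isOpenPosMeasure [PseudoMetricSpace X] [MeasurableSpace X]
    [OpensMeasurableSpace X] (μ : Measure X) [SFinite μ] [μ.IsOpenPosMeasure]
    {ε : ℝ≥0} (hε : ε ≠ 0) {N : Set X} (hN : IsSeparated ε N) : N.Countable := by
  have hdisj : Pairwise (Disjoint on fun y : N => ball (y : X) (ε / 2)) := by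
    intro y z hyz
    refine Set.disjoint_left.2 fun w hwy hwz => (hN y.2 z.2 (Subtype.coe_ne_coe.2 hyz)).not_ge ?_
    rw [edist_dist, ENNReal.ofReal_le_iff_le_toReal ENNReal.coe_ne_top, ENNReal.coe_toReal]
    calc dist (y : X) z ≤ dist w y + dist w z := dist_triangle_left _ _ _
      _ ≤ ε / 2 + ε / 2 := add_le_add (mem_ball.1 hwy).le (mem_ball.1 hwz).le
      _ = ε := add_halves _
  have hpos : ∀ y : N, 0 < μ (ball (y : X) (ε / 2)) := fun y =>
    isOpen_ball.measure_pos μ ⟨y, mem_ball_self (by positivity)⟩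
  simpa [hpos, Set.countable_univ_iff, Set.countable_coe_iff] using
    Measure.countable_meas_pos_of_disjoint_iUnion (μ := μ) (fun _ => measurableSet_ball) hdisj

theorem secondCountableTopology_of_isOpenPosMeasure [PseudoMetricSpace X] [MeasurableSpace X]
    [OpensMeasurableSpace X] (μ : Measure X) [SFinite μ] [μ.IsOpenPosMeasure] :
    SecondCountableTopology X := by
  refine secondCountable_of_almost_dense_set fun ε hε => ?_
  obtain ⟨N, -, hsep, hcover⟩ := exists_isSeparated_isCover ε.toNNReal (Set.univ : Set X)
  refine ⟨N, hsep.countable_of_isOpenPosMeasure μ (by simpa using hε), fun x => ?_⟩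
  simpa [hε.le] using hcover.subset_iUnion_closedBall (Set.mem_univ x)

end Metric

namespace MeasureTheory

variable {X : Type*}

theorem sigmaFinite_of_isBounded_lt_top [PseudoMetricSpace X] [MeasurableSpace X]
    {μ : Measure X} (hfin : ∀ s : Set X, Bornology.IsBounded s → μ s < ⊤) : SigmaFinite μ := by
  rcases isEmpty_or_nonempty X with _ | ⟨⟨x₀⟩⟩
  · exact Measure.sigmaFinite_of_countable Set.countable_empty (by simp)
      (Set.eq_univ_of_univ_subset fun x => isEmptyElim x)
  · exact ⟨⟨⟨fun n : ℕ => closedBall x₀ n, fun _ => trivial,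
      fun _ => hfin _ isBounded_closedBall, iUnion_closedBall_nat x₀⟩⟩⟩

variable [PseudoMetricSpace X] [MeasurableSpace X] [OpensMeasurableSpace X]
  [SecondCountableTopology X] {μ : Measure X} [SFinite μ]

theorem measurable_measure_closedBall (r : ℝ) : Measurable fun x => μ (closedBall x r) := by
  convert measurable_measure_prodMk_left (ν := μ)
    (isClosed_le continuous_dist (continuous_const (y := r))).measurableSet with x
  ext y
  simp [dist_comm]

theorem lintegral_mul_setLIntegral_closedBall_comm {k g : X → ℝ≥0∞} (hk : AEMeasurable k μ)
    (hg : AEMeasurable g μ) (r : ℝ) :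
    ∫⁻ x, k x * ∫⁻ y in closedBall x r, g y ∂μ ∂μ
      = ∫⁻ y, g y * ∫⁻ x in closedBall y r, k x ∂μ ∂μ := by
  set F := {p : X × X | dist p.1 p.2 ≤ r}.indicator fun p => k p.1 * g p.2
  have hF : AEMeasurable F (μ.prod μ) := (hk.comp_fst.mul hg.comp_snd).indicator
    (isClosed_le continuous_dist continuous_const).measurableSet
  have slice_left (x : X) : ∫⁻ y, F (x, y) ∂μ = k x * ∫⁻ y in closedBall x r, g y ∂μ := by
    rw [← lintegral_const_mul'' _ hg.restrict, ← lintegral_indicator measurableSet_closedBall]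
    congr with y
    simp [F, Set.indicator, dist_comm]
  have slice_right (y : X) : ∫⁻ x, F (x, y) ∂μ = g y * ∫⁻ x in closedBall y r, k x ∂μ := by
    rw [← lintegral_const_mul'' _ hk.restrict, ← lintegral_indicator measurableSet_closedBall]
    congr with x
    simp [F, Set.indicator, mul_comm]
  simp_rw [← slice_left, ← slice_right]
  exact lintegral_lintegral_swap hF

end MeasureTheory

theorem ENNReal.enorm_toReal_inv_le (a : ℝ≥0∞) : ‖a.toReal⁻¹‖ₑ ≤ a⁻¹ := by
  rcases eq_or_ne a.toReal 0 with ha | ha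
  · simp [ha]
  · rw [enorm_inv ha, Real.enorm_toReal (ENNReal.toReal_ne_zero.1 ha).2]

section AveragingOperator

variable {X : Type*} [MetricSpace X] [MeasurableSpace X] {μ : Measure X}

theorem enorm_avgOp_le (r : ℝ) (f : X → ℝ) (x : X) :
    ‖avgOp μ r f x‖ₑ ≤ (μ (closedBall x r))⁻¹ * ∫⁻ y in closedBall x r, ‖f y‖ₑ ∂μ := by
  rw [avgOp, enorm_mul]
  exact mul_le_mul' (ENNReal.enorm_toReal_inv_le _) (enorm_integral_le_lintegral_enorm f)

theorem eLpNorm_one_avgOp_le [OpensMeasurableSpace X] [SecondCountableTopology X] [SFinite μ]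
    (r : ℝ) {f : X → ℝ} (hf : AEStronglyMeasurable f μ) :
    eLpNorm (avgOp μ r f) 1 μ ≤ ∫⁻ y, ‖f y‖ₑ * conjFn μ r y ∂μ :=
  calc eLpNorm (avgOp μ r f) 1 μ = ∫⁻ x, ‖avgOp μ r f x‖ₑ ∂μ := eLpNorm_one_eq_lintegral_enorm
    _ ≤ ∫⁻ x, (μ (closedBall x r))⁻¹ * ∫⁻ y in closedBall x r, ‖f y‖ₑ ∂μ ∂μ :=
      lintegral_mono fun x => enorm_avgOp_le r f x
    _ = ∫⁻ y, ‖f y‖ₑ * conjFn μ r y ∂μ :=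
      lintegral_mul_setLIntegral_closedBall_comm
        (measurable_measure_closedBall r).inv.aemeasurable hf.enorm r

end AveragingOperator

theorem stmt1_general {X : Type*} [MetricSpace X] [MeasurableSpace X] [BorelSpace X]
    (μ : Measure X)
    (hfin : ∀ s : Set X, Bornology.IsBounded s → μ s < ⊤)
    (hpos : ∀ U : Set X, IsOpen U → U.Nonempty → 0 < μ U)
    (s : ℝ) :
    ∀ f : X → ℝ, Integrable f μ →
      eLpNorm (avgOp μ s f) 1 μ ≤ essSup (conjFn μ s) μ * eLpNorm f 1 μ := by
  intro f hf
  have := sigmaFinite_of_isBounded_lt_top hfin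
  have : μ.IsOpenPosMeasure := ⟨fun U hU hne => (hpos U hU hne).ne'⟩
  have := secondCountableTopology_of_isOpenPosMeasure μ
  calc eLpNorm (avgOp μ s f) 1 μ ≤ ∫⁻ y, ‖f y‖ₑ * conjFn μ s y ∂μ := eLpNorm_one_avgOp_le s hf.1
    _ ≤ ∫⁻ y, ‖f y‖ₑ * essSup (conjFn μ s) μ ∂μ := by
      refine lintegral_mono_ae ?_
      filter_upwards [ENNReal.ae_le_essSup (conjFn μ s)] with y hy
      gcongr
    _ = essSup (conjFn μ s) μ * eLpNorm f 1 μ := by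
      rw [lintegral_mul_const'' _ hf.1.enorm, eLpNorm_one_eq_lintegral_enorm, mul_comm]

/-- If the conjugate function `a_s` is essentially bounded, then
`‖A_s f‖_{L¹(μ)} ≤ ‖a_s‖_{L^∞(μ)} ⬝ ‖f‖_{L¹(μ)}` for every `f ∈ L¹(μ)`. -/
theorem stmt1 {X : Type*} [MetricSpace X] [MeasurableSpace X] [BorelSpace X]
    (μ : Measure X)
    (hfin : ∀ s : Set X, Bornology.IsBounded s → μ s < ⊤)
    (hpos : ∀ U : Set X, IsOpen U → U.Nonempty → 0 < μ U)
    (s : ℝ) (hs : 0 < s)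
    (hbound : essSup (conjFn μ s) μ < ⊤) :
    ∀ f : X → ℝ, Integrable f μ →
      eLpNorm (avgOp μ s f) 1 μ ≤ essSup (conjFn μ s) μ * eLpNorm f 1 μ :=
  stmt1_general μ hfin hpos s
end

section
/- Let (X,d) be a metric space and μ a Borel measure on X that is finite on every bounded Borel set and positive on every nonempty open set, let s > 0, and let M ≥ 1. If ‖A_s f‖_{L^1(μ)} ≤ M ‖f‖_{L^1(μ)} for every f ∈ L^1(μ), then for every p with 1 < p < ∞ and every f ∈ L^p(μ), ‖A_s f‖_{L^p(μ)} ≤ M^{1/p} ‖f‖_{L^p(μ)}. -/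
/-!
Jensen's inequality for the convex function `t ↦ |t|^p` gives the pointwise bound
`|A_s f|^p ≤ A_s (|f|^p)`. Integrating it and applying the `L¹` bound to `|f|^p ∈ L¹` yields
`‖A_s f‖_p^p ≤ M ‖|f|^p‖_1 = M ‖f‖_p^p`.
-/

open MeasureTheory Metric ENNReal

theorem avgOp_eq_setAverage {X : Type*} [MetricSpace X] [MeasurableSpace X]
    (μ : Measure X) (r : ℝ) (f : X → ℝ) (x : X) :
    avgOp μ r f x = ⨍ y in closedBall x r, f y ∂μ := by
  rw [setAverage_eq, smul_eq_mul, avgOp, measureReal_def]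

theorem ENNReal.le_ofReal_rpow_mul_of_rpow_le {a b : ℝ≥0∞} {M q : ℝ} (hq : 0 < q)
    (h : a ^ q ≤ ENNReal.ofReal M * b ^ q) : a ≤ ENNReal.ofReal (M ^ (1 / q)) * b := by
  have hq' : 0 < 1 / q := one_div_pos.mpr hq
  have hM : ENNReal.ofReal M ^ (1 / q) ≤ ENNReal.ofReal (M ^ (1 / q)) := by
    rcases le_or_gt 0 M with hM | hM
    · exact (ENNReal.ofReal_rpow_of_nonneg hM hq'.le).le
    · rw [ENNReal.ofReal_of_nonpos hM.le, ENNReal.zero_rpow_of_pos hq']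
      exact zero_le
  calc a = (a ^ q) ^ (1 / q) := by rw [← ENNReal.rpow_mul, mul_one_div_cancel hq.ne', rpow_one]
    _ ≤ (ENNReal.ofReal M * b ^ q) ^ (1 / q) := ENNReal.rpow_le_rpow h hq'.le
    _ = ENNReal.ofReal M ^ (1 / q) * b := by
      rw [ENNReal.mul_rpow_of_nonneg _ _ hq'.le, ← ENNReal.rpow_mul, mul_one_div_cancel hq.ne',
        rpow_one]
    _ ≤ ENNReal.ofReal (M ^ (1 / q)) * b := by gcongr

section Jensen

variable {α E : Type*} [MeasurableSpace α] [NormedAddCommGroup E] [NormedSpace ℝ E]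
  [CompleteSpace E] {μ : Measure α} {s : Set α} {f : α → E} {p : ℝ≥0∞}

theorem norm_setAverage_rpow_le (hp : 1 ≤ p) (hp_top : p ≠ ∞) (hf : MemLp f p (μ.restrict s)) :
    ‖⨍ x in s, f x ∂μ‖ ^ p.toReal ≤ ⨍ x in s, ‖f x‖ ^ p.toReal ∂μ := by
  have hq : 1 ≤ p.toReal := by
    simpa using ENNReal.toReal_mono hp_top hp
  by_cases hs : μ s ≠ 0 ∧ μ s ≠ ∞
  swap
  · -- both averages are junk zeros
    have hs' : μ.real s = 0 := by
      rw [not_and_or, not_ne_iff, not_ne_iff] at hs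
      rcases hs with hs | hs <;> simp [measureReal_def, hs]
    simp [setAverage_eq, hs', Real.zero_rpow (by linarith : p.toReal ≠ 0)]
  obtain ⟨h0, htop⟩ := hs
  have : IsFiniteMeasure (μ.restrict s) := isFiniteMeasure_restrict.mpr htop
  have hfi : IntegrableOn f s μ := hf.integrable hp
  have hgi : IntegrableOn (fun x => ‖f x‖ ^ p.toReal) s μ :=
    hf.integrable_norm_rpow (by positivity) hp_top
  calc ‖⨍ x in s, f x ∂μ‖ ^ p.toReal ≤ (⨍ x in s, ‖f x‖ ∂μ) ^ p.toReal := by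
        gcongr
        exact convexOn_univ_norm.map_set_average_le continuous_norm.continuousOn isClosed_univ
          h0 htop (ae_of_all _ fun _ => Set.mem_univ _) hfi hfi.norm
    _ ≤ ⨍ x in s, ‖f x‖ ^ p.toReal ∂μ :=
        (convexOn_rpow hq).map_set_average_le
          (Real.continuous_rpow_const (by linarith)).continuousOn isClosed_Ici h0 htop
          (ae_of_all _ fun _ => norm_nonneg _) hfi.norm hgi

end Jensen

theorem eLpNorm_le_of_eLpNorm_one_le_of_rpow_norm_le {α : Type*} [MeasurableSpace α]
    {μ : Measure α} {T : (α → ℝ) → α → ℝ} {M : ℝ}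
    (hT : ∀ g : α → ℝ, Integrable g μ → eLpNorm (T g) 1 μ ≤ ENNReal.ofReal M * eLpNorm g 1 μ)
    {p : ℝ≥0∞} (hp : 1 < p) (hp_top : p ≠ ∞) {f : α → ℝ} (hf : MemLp f p μ)
    (hf_jensen : ∀ x, ‖T f x‖ ^ p.toReal ≤ T (fun y => ‖f y‖ ^ p.toReal) x) :
    eLpNorm (T f) p μ ≤ ENNReal.ofReal (M ^ (1 / p.toReal)) * eLpNorm f p μ := by
  have hp0 : p ≠ 0 := (zero_lt_one.trans hp).ne'
  have hq : 0 < p.toReal := ENNReal.toReal_pos hp0 hp_top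
  have eLpNorm_rpow (g : α → ℝ) :
      eLpNorm g p μ ^ p.toReal = eLpNorm (fun x => ‖g x‖ ^ p.toReal) 1 μ := by
    rw [eLpNorm_norm_rpow _ hq, one_mul, ofReal_toReal hp_top]
  refine ENNReal.le_ofReal_rpow_mul_of_rpow_le hq ?_
  calc eLpNorm (T f) p μ ^ p.toReal = eLpNorm (fun x => ‖T f x‖ ^ p.toReal) 1 μ :=
        eLpNorm_rpow _
    _ ≤ eLpNorm (T fun y => ‖f y‖ ^ p.toReal) 1 μ :=
        eLpNorm_mono_real fun x => by
          rw [Real.norm_of_nonneg (by positivity)]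
          exact hf_jensen x
    _ ≤ ENNReal.ofReal M * eLpNorm (fun y => ‖f y‖ ^ p.toReal) 1 μ :=
        hT _ (hf.integrable_norm_rpow hp0 hp_top)
    _ = ENNReal.ofReal M * eLpNorm f p μ ^ p.toReal := by rw [eLpNorm_rpow]

theorem stmt10_general {X : Type*} [MetricSpace X] [MeasurableSpace X]
    (μ : Measure X)
    (s : ℝ) (M : ℝ)
    (h1 : ∀ f : X → ℝ, Integrable f μ →
      eLpNorm (avgOp μ s f) 1 μ ≤ ENNReal.ofReal M * eLpNorm f 1 μ) :
    ∀ p : ℝ≥0∞, 1 < p → p ≠ ⊤ → ∀ f : X → ℝ, MemLp f p μ →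
      eLpNorm (avgOp μ s f) p μ
        ≤ ENNReal.ofReal (M ^ (1 / p.toReal)) * eLpNorm f p μ := by
  intro p hp hp_top f hf
  refine eLpNorm_le_of_eLpNorm_one_le_of_rpow_norm_le h1 hp hp_top hf fun x => ?_
  simpa only [avgOp_eq_setAverage] using norm_setAverage_rpow_le hp.le hp_top (hf.restrict _)

/-- If `‖A_s f‖_{L¹} ≤ M ‖f‖_{L¹}` for every `f ∈ L¹(μ)` (with `M ≥ 1`), then for
every `1 < p < ∞` and `f ∈ L^p(μ)`, `‖A_s f‖_{L^p} ≤ M^{1/p} ‖f‖_{L^p}`. -/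
theorem stmt10 {X : Type*} [MetricSpace X] [MeasurableSpace X] [BorelSpace X]
    (μ : Measure X)
    (hfin : ∀ s : Set X, Bornology.IsBounded s → μ s < ⊤)
    (hpos : ∀ U : Set X, IsOpen U → U.Nonempty → 0 < μ U)
    (s : ℝ) (hs : 0 < s) (M : ℝ) (hM : 1 ≤ M)
    (h1 : ∀ f : X → ℝ, Integrable f μ →
      eLpNorm (avgOp μ s f) 1 μ ≤ ENNReal.ofReal M * eLpNorm f 1 μ) :
    ∀ p : ℝ≥0∞, 1 < p → p ≠ ⊤ → ∀ f : X → ℝ, MemLp f p μ →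
      eLpNorm (avgOp μ s f) p μ
        ≤ ENNReal.ofReal (M ^ (1 / p.toReal)) * eLpNorm f p μ :=
  stmt10_general μ s M h1
end

section
/- There exists a purely atomic Borel measure μ on ℝ^d equipped with the supremum norm ‖·‖_∞, finite on bounded sets and not identically zero, such that the averaging operator A_1 over closed balls of radius 1 has operator norm on L^1(μ) exactly equal to 2^d. In particular, for each n ≥ 1, taking μ = Σ_{n≥1} (n^{-1} δ_{3n e_1} + Σ_{i=1}^{2^d} δ_{x_i + 3n e_1}), where x_1,…,x_{2^d} are the vertices of [-3/4,3/4]^d, and f_n = n·1_{{3n e_1}}, one has ‖f_n‖_{L^1(μ)} = 1 and ‖A_1 f_n‖_{L^1(μ)} > 2^d · n/(n+1). -/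
open MeasureTheory Metric ENNReal

/-- The point `3 n e₁` in `ℝ^d` (with the sup norm, modelled as `Fin d → ℝ`). -/
noncomputable def basePt (d n : ℕ) : Fin d → ℝ := fun j => if j.val = 0 then 3 * n else 0

/-- The vertex of the cube `[-3/4, 3/4]^d` determined by the sign pattern `ε`,
translated by `3 n e₁`. -/
noncomputable def vertexPt (d : ℕ) (ε : Fin d → Bool) (n : ℕ) : Fin d → ℝ :=
  fun j => (if ε j then (3 : ℝ) / 4 else -(3 / 4)) + (if j.val = 0 then 3 * n else 0)

/-- The discrete measure `μ = Σ_{n ≥ 1} (n⁻¹ δ_{3n e₁} + Σ_i δ_{xᵢ + 3n e₁})`,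
where the `xᵢ` are the vertices of `[-3/4, 3/4]^d`. -/
noncomputable def exMeasure (d : ℕ) : Measure (Fin d → ℝ) :=
  Measure.sum fun n : ℕ =>
    ((n + 1 : ℝ≥0∞))⁻¹ • Measure.dirac (basePt d (n + 1)) +
      ∑ ε : Fin d → Bool, Measure.dirac (vertexPt d ε (n + 1))

lemma ofReal_norm_eq_coe_nnnorm {E : Type*} [SeminormedAddCommGroup E] (a : E) :
    ENNReal.ofReal ‖a‖ = (‖a‖₊ : ℝ≥0∞) := by
  rw [ofReal_norm, enorm_eq_nnnorm]

lemma eLpNorm_one_eq_lintegral_nnnorm {α F : Type*} [MeasurableSpace α] {μ : Measure α}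
    [NormedAddCommGroup F] {f : α → F} :
    eLpNorm f 1 μ = ∫⁻ x, (‖f x‖₊ : ℝ≥0∞) ∂μ := by
  rw [eLpNorm_one_eq_lintegral_enorm]; rfl

lemma one_le_abs_nat_sub {a b : ℕ} (h : b ≠ a) : (1:ℝ) ≤ |(b:ℝ) - (a:ℝ)| := by
  have h1 : 1 ≤ |(b:ℤ) - (a:ℤ)| := Int.one_le_abs (by omega)
  exact_mod_cast h1

lemma abs_add_ge {x t : ℝ} : |t| - |x| ≤ |x + t| := by
  have h1 : |t| ≤ |x + t| + |x| := by
    have := abs_add_le (x + t) (-x)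
    simpa using this
  linarith

lemma abs3 {a b : ℕ} : |3*(b:ℝ) - 3*(a:ℝ)| = 3 * |(b:ℝ) - (a:ℝ)| := by
  rw [show (3:ℝ)*b - 3*a = 3*((b:ℝ)-a) from by ring, abs_mul]; norm_num

lemma base_mem_ball_base {d : ℕ} (hd : 0 < d) {a b : ℕ} :
    basePt d b ∈ closedBall (basePt d a) 1 ↔ b = a := by
  constructor
  · intro h
    by_contra hne
    rw [mem_closedBall] at h
    have h0 := (dist_le_pi_dist (basePt d b) (basePt d a) ⟨0, hd⟩).trans h
    simp only [basePt, Real.dist_eq, if_pos] at h0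
    push_cast at h0
    rw [abs3] at h0
    have h1 := one_le_abs_nat_sub hne
    linarith
  · rintro rfl; exact mem_closedBall_self one_pos.le

lemma vertex_mem_ball_base {d : ℕ} (hd : 0 < d) {a b : ℕ} {ε : Fin d → Bool} :
    vertexPt d ε b ∈ closedBall (basePt d a) 1 ↔ b = a := by
  constructor
  · intro h
    by_contra hne
    rw [mem_closedBall] at h
    have h0 := (dist_le_pi_dist (vertexPt d ε b) (basePt d a) ⟨0, hd⟩).trans h
    simp only [vertexPt, basePt, Real.dist_eq, if_pos] at h0
    push_cast at h0
    have h1 := one_le_abs_nat_sub hne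
    have h2 : |(if ε ⟨0, hd⟩ then (3:ℝ)/4 else -(3/4))| ≤ 3/4 := by
      split_ifs <;> rw [abs_le] <;> norm_num
    have h4 := abs_add_ge (x := (if ε ⟨0, hd⟩ then (3:ℝ)/4 else -(3/4)))
      (t := 3*(b:ℝ) - 3*(a:ℝ))
    rw [abs3] at h4
    rw [show (if ε ⟨0, hd⟩ then (3:ℝ)/4 else -(3/4)) + (3*(b:ℝ) - 3*a)
        = (if ε ⟨0, hd⟩ then (3:ℝ)/4 else -(3/4)) + 3*b - 3*a from by ring] at h4
    linarith
  · rintro rfl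
    rw [mem_closedBall, dist_pi_le_iff one_pos.le]
    intro j
    simp only [vertexPt, basePt, Real.dist_eq]
    split_ifs <;> [skip; skip; skip; skip] <;>
      · rw [abs_le]; constructor <;> push_cast <;> linarith

lemma base_mem_ball_vertex {d : ℕ} (hd : 0 < d) {a b : ℕ} {ε : Fin d → Bool} :
    basePt d b ∈ closedBall (vertexPt d ε a) 1 ↔ b = a := by
  have h : basePt d b ∈ closedBall (vertexPt d ε a) 1 ↔
      vertexPt d ε a ∈ closedBall (basePt d b) 1 := by
    simp [mem_closedBall, dist_comm]
  rw [h, vertex_mem_ball_base hd]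
  exact eq_comm

lemma vertex_mem_ball_vertex {d : ℕ} (hd : 0 < d) {a b : ℕ} {ε ε' : Fin d → Bool} :
    vertexPt d ε' b ∈ closedBall (vertexPt d ε a) 1 ↔ (b = a ∧ ε' = ε) := by
  constructor
  · intro h
    rw [mem_closedBall] at h
    have hba : b = a := by
      by_contra hne
      have h0 := (dist_le_pi_dist (vertexPt d ε' b) (vertexPt d ε a) ⟨0, hd⟩).trans h
      simp only [vertexPt, Real.dist_eq, if_pos] at h0
      push_cast at h0
      have h1 := one_le_abs_nat_sub hne
      have h2 : |(if ε' ⟨0, hd⟩ then (3:ℝ)/4 else -(3/4)) - (if ε ⟨0, hd⟩ then (3:ℝ)/4 else -(3/4))| ≤ 3/2 := by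
        split_ifs <;> rw [abs_le] <;> norm_num
      have h4 := abs_add_ge
        (x := (if ε' ⟨0, hd⟩ then (3:ℝ)/4 else -(3/4)) - (if ε ⟨0, hd⟩ then (3:ℝ)/4 else -(3/4)))
        (t := 3*(b:ℝ) - 3*(a:ℝ))
      rw [abs3] at h4
      rw [show ((if ε' ⟨0, hd⟩ then (3:ℝ)/4 else -(3/4)) - (if ε ⟨0, hd⟩ then (3:ℝ)/4 else -(3/4)))
          + (3*(b:ℝ) - 3*a)
          = (if ε' ⟨0, hd⟩ then (3:ℝ)/4 else -(3/4)) + 3*b - ((if ε ⟨0, hd⟩ then (3:ℝ)/4 else -(3/4)) + 3*a) from by ring] at h4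
      linarith
    refine ⟨hba, ?_⟩
    subst hba
    by_contra hne
    obtain ⟨j, hj⟩ := Function.ne_iff.1 hne
    have h0 := (dist_le_pi_dist (vertexPt d ε' b) (vertexPt d ε b) j).trans h
    simp only [vertexPt, Real.dist_eq] at h0
    generalize hc : ((if (j:ℕ) = 0 then 3 * b else 0 : ℕ) : ℝ) = c at h0
    rw [show (if ε' j then (3:ℝ)/4 else -(3/4)) + c - ((if ε j then (3:ℝ)/4 else -(3/4)) + c)
        = (if ε' j then (3:ℝ)/4 else -(3/4)) - (if ε j then (3:ℝ)/4 else -(3/4)) from by ring] at h0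
    rcases Bool.eq_false_or_eq_true (ε' j) with h6 | h6 <;>
      rcases Bool.eq_false_or_eq_true (ε j) with h7 | h7 <;>
        simp [h6, h7] at hj h0 <;> rw [abs_le] at h0 <;> [skip; skip] <;> push_cast at h0 <;> linarith [h0.1, h0.2]
  · rintro ⟨rfl, rfl⟩; exact mem_closedBall_self one_pos.le

lemma basePt_inj {d : ℕ} (hd : 0 < d) {a b : ℕ} : basePt d b = basePt d a ↔ b = a := by
  constructor
  · intro h
    have h1 := congrFun h ⟨0, hd⟩
    simp only [basePt, if_pos] at h1
    have h2 : (b:ℝ) = a := by push_cast at h1; linarith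
    exact_mod_cast h2
  · rintro rfl; rfl

lemma vertexPt_ne_basePt {d : ℕ} (hd : 0 < d) {a b : ℕ} {ε : Fin d → Bool} :
    vertexPt d ε b ≠ basePt d a := by
  intro h
  have h0 := congrFun h ⟨0, hd⟩
  simp only [vertexPt, basePt, if_pos] at h0
  push_cast at h0
  split_ifs at h0 with hb
  · have h1 : (12*a:ℝ) = 12*b + 3 := by linarith
    have h2 : (12*a:ℕ) = (12*b+3:ℕ) := by exact_mod_cast h1
    omega
  · have h1 : (12*a:ℝ) + 3 = 12*b := by linarith
    have h2 : ((12*a+3:ℕ):ℝ) = ((12*b:ℕ):ℝ) := by push_cast; linarith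
    have h3 : (12*a+3:ℕ) = (12*b:ℕ) := by exact_mod_cast h2
    omega

lemma vertexPt_inj {d : ℕ} (hd : 0 < d) {a b : ℕ} {ε ε' : Fin d → Bool} :
    vertexPt d ε' b = vertexPt d ε a ↔ (b = a ∧ ε' = ε) := by
  constructor
  · intro h
    have hmem : vertexPt d ε' b ∈ closedBall (vertexPt d ε a) 1 := by
      rw [h]; exact mem_closedBall_self one_pos.le
    exact (vertex_mem_ball_vertex hd).1 hmem
  · rintro ⟨rfl, rfl⟩; rfl

lemma lint_exMeasure (d : ℕ) (h : (Fin d → ℝ) → ℝ≥0∞) :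
    ∫⁻ x, h x ∂(exMeasure d) =
      ∑' m : ℕ, (((m:ℝ≥0∞)+1)⁻¹ * h (basePt d (m+1)) +
        ∑ ε : Fin d → Bool, h (vertexPt d ε (m+1))) := by
  rw [exMeasure, lintegral_sum_measure]
  congr 1; funext m
  rw [lintegral_add_measure, lintegral_smul_measure, lintegral_dirac,
    lintegral_finset_sum_measure]
  simp [lintegral_dirac]

lemma setLint (d : ℕ) {s : Set (Fin d → ℝ)} (hs : MeasurableSet s) (h : (Fin d → ℝ) → ℝ≥0∞) :
    ∫⁻ x in s, h x ∂(exMeasure d) =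
      ∑' m : ℕ, (((m:ℝ≥0∞)+1)⁻¹ * s.indicator h (basePt d (m+1)) +
        ∑ ε : Fin d → Bool, s.indicator h (vertexPt d ε (m+1))) := by
  rw [← lintegral_indicator hs, lint_exMeasure]

lemma setLint_ball_base {d : ℕ} (hd : 0 < d) (m : ℕ) (h : (Fin d → ℝ) → ℝ≥0∞) :
    ∫⁻ x in closedBall (basePt d (m+1)) 1, h x ∂(exMeasure d) =
      ((m:ℝ≥0∞)+1)⁻¹ * h (basePt d (m+1)) + ∑ ε : Fin d → Bool, h (vertexPt d ε (m+1)) := by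
  rw [setLint d measurableSet_closedBall]
  rw [tsum_eq_single m]
  · congr 1
    · rw [Set.indicator_of_mem ((base_mem_ball_base hd).2 rfl)]
    · refine Finset.sum_congr rfl fun ε _ => ?_
      rw [Set.indicator_of_mem ((vertex_mem_ball_base hd).2 rfl)]
  · intro k hk
    rw [Set.indicator_of_notMem (fun hmem => hk (by
      have := (base_mem_ball_base hd).1 hmem; omega))]
    rw [mul_zero, zero_add]
    refine Finset.sum_eq_zero fun ε _ => ?_
    rw [Set.indicator_of_notMem (fun hmem => hk (by
      have := (vertex_mem_ball_base hd).1 hmem; omega))]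

lemma setLint_ball_vertex {d : ℕ} (hd : 0 < d) (m : ℕ) (ε : Fin d → Bool)
    (h : (Fin d → ℝ) → ℝ≥0∞) :
    ∫⁻ x in closedBall (vertexPt d ε (m+1)) 1, h x ∂(exMeasure d) =
      ((m:ℝ≥0∞)+1)⁻¹ * h (basePt d (m+1)) + h (vertexPt d ε (m+1)) := by
  rw [setLint d measurableSet_closedBall]
  rw [tsum_eq_single m]
  · congr 1
    · rw [Set.indicator_of_mem ((base_mem_ball_vertex hd).2 rfl)]
    · rw [Finset.sum_eq_single ε]
      · rw [Set.indicator_of_mem ((vertex_mem_ball_vertex hd).2 ⟨rfl, rfl⟩)]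
      · intro ε' _ hne
        rw [Set.indicator_of_notMem (fun hmem => hne ((vertex_mem_ball_vertex hd).1 hmem).2)]
      · intro habs; exact absurd (Finset.mem_univ ε) habs
  · intro k hk
    rw [Set.indicator_of_notMem (fun hmem => hk (by
      have := (base_mem_ball_vertex hd).1 hmem; omega))]
    rw [mul_zero, zero_add]
    refine Finset.sum_eq_zero fun ε' _ => ?_
    rw [Set.indicator_of_notMem (fun hmem => hk (by
      have := ((vertex_mem_ball_vertex hd).1 hmem).1; omega))]

lemma setLint_singleton_base {d : ℕ} (hd : 0 < d) (m : ℕ) (h : (Fin d → ℝ) → ℝ≥0∞) :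
    ∫⁻ x in {basePt d (m+1)}, h x ∂(exMeasure d) = ((m:ℝ≥0∞)+1)⁻¹ * h (basePt d (m+1)) := by
  rw [setLint d (measurableSet_singleton _)]
  rw [tsum_eq_single m]
  · rw [Set.indicator_of_mem (Set.mem_singleton _)]
    rw [Finset.sum_eq_zero fun ε _ => Set.indicator_of_notMem
      (fun hmem => vertexPt_ne_basePt hd (Set.mem_singleton_iff.1 hmem)) h, add_zero]
  · intro k hk
    rw [Set.indicator_of_notMem (fun hmem => hk (by
      have := (basePt_inj hd).1 (Set.mem_singleton_iff.1 hmem); omega)), mul_zero, zero_add]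
    exact Finset.sum_eq_zero fun ε _ => Set.indicator_of_notMem
      (fun hmem => vertexPt_ne_basePt hd (Set.mem_singleton_iff.1 hmem)) h

lemma setLint_singleton_vertex {d : ℕ} (hd : 0 < d) (m : ℕ) (ε : Fin d → Bool)
    (h : (Fin d → ℝ) → ℝ≥0∞) :
    ∫⁻ x in {vertexPt d ε (m+1)}, h x ∂(exMeasure d) = h (vertexPt d ε (m+1)) := by
  rw [setLint d (measurableSet_singleton _)]
  rw [tsum_eq_single m]
  · rw [Set.indicator_of_notMem (fun hmem =>
        vertexPt_ne_basePt hd (Set.mem_singleton_iff.1 hmem).symm), mul_zero,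
      zero_add, Finset.sum_eq_single ε]
    · rw [Set.indicator_of_mem (Set.mem_singleton _)]
    · intro ε' _ hne
      exact Set.indicator_of_notMem
        (fun hmem => hne ((vertexPt_inj hd).1 (Set.mem_singleton_iff.1 hmem)).2) h
    · intro habs; exact absurd (Finset.mem_univ ε) habs
  · intro k hk
    rw [Set.indicator_of_notMem (fun hmem =>
        vertexPt_ne_basePt hd (Set.mem_singleton_iff.1 hmem).symm), mul_zero,
      zero_add]
    refine Finset.sum_eq_zero fun ε' _ => Set.indicator_of_notMem (fun hmem => hk (by
      have := ((vertexPt_inj hd).1 (Set.mem_singleton_iff.1 hmem)).1; omega)) h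

lemma sum_one_eq (d : ℕ) : ∑ _ε : Fin d → Bool, (1:ℝ≥0∞) = 2^d := by
  simp [Finset.card_univ]

lemma measure_ball_base {d : ℕ} (hd : 0 < d) (m : ℕ) :
    exMeasure d (closedBall (basePt d (m+1)) 1) = ((m:ℝ≥0∞)+1)⁻¹ + 2^d := by
  rw [← setLIntegral_one, setLint_ball_base hd, mul_one, sum_one_eq]

lemma measure_ball_vertex {d : ℕ} (hd : 0 < d) (m : ℕ) (ε : Fin d → Bool) :
    exMeasure d (closedBall (vertexPt d ε (m+1)) 1) = ((m:ℝ≥0∞)+1)⁻¹ + 1 := by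
  rw [← setLIntegral_one, setLint_ball_vertex hd, mul_one]

lemma measure_singleton_base {d : ℕ} (hd : 0 < d) (m : ℕ) :
    exMeasure d {basePt d (m+1)} = ((m:ℝ≥0∞)+1)⁻¹ := by
  rw [← setLIntegral_one, setLint_singleton_base hd, mul_one]

lemma measure_singleton_vertex {d : ℕ} (hd : 0 < d) (m : ℕ) (ε : Fin d → Bool) :
    exMeasure d {vertexPt d ε (m+1)} = 1 := by
  rw [← setLIntegral_one, setLint_singleton_vertex hd]

lemma nnnorm_avgOp_le {X : Type*} [MetricSpace X] [MeasurableSpace X]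
    (μ : Measure X) (f : X → ℝ) (x : X) :
    (‖avgOp μ 1 f x‖₊ : ℝ≥0∞) ≤
      (μ (closedBall x 1))⁻¹ * ∫⁻ y in closedBall x 1, (‖f y‖₊ : ℝ≥0∞) ∂μ := by
  rcases eq_or_ne (μ (closedBall x 1)) 0 with h0 | h0
  · simp [avgOp, h0]
  rcases eq_or_ne (μ (closedBall x 1)) ⊤ with hT | hT
  · simp [avgOp, hT]
  rcases eq_or_ne (∫⁻ y in closedBall x 1, (‖f y‖₊ : ℝ≥0∞) ∂μ) ⊤ with hN | hN
  · rw [hN, ENNReal.mul_top (ENNReal.inv_ne_zero.2 hT)]; exact le_top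
  have hb : ‖avgOp μ 1 f x‖ ≤
      (μ (closedBall x 1)).toReal⁻¹ * (∫⁻ y in closedBall x 1, (‖f y‖₊ : ℝ≥0∞) ∂μ).toReal := by
    rw [avgOp, norm_mul, norm_inv, Real.norm_eq_abs, abs_of_nonneg ENNReal.toReal_nonneg]
    refine mul_le_mul_of_nonneg_left ?_ (by positivity)
    refine (norm_integral_le_lintegral_norm _).trans ?_
    refine le_of_eq ?_
    congr 1
    exact lintegral_congr fun y => ofReal_norm_eq_coe_nnnorm (f y)
  calc (‖avgOp μ 1 f x‖₊ : ℝ≥0∞) = ENNReal.ofReal ‖avgOp μ 1 f x‖ :=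
        (ofReal_norm_eq_coe_nnnorm _).symm
    _ ≤ ENNReal.ofReal ((μ (closedBall x 1)).toReal⁻¹ *
        (∫⁻ y in closedBall x 1, (‖f y‖₊ : ℝ≥0∞) ∂μ).toReal) := ENNReal.ofReal_le_ofReal hb
    _ = (μ (closedBall x 1))⁻¹ * ∫⁻ y in closedBall x 1, (‖f y‖₊ : ℝ≥0∞) ∂μ := by
        rw [ENNReal.ofReal_mul (by positivity), ← ENNReal.toReal_inv,
          ENNReal.ofReal_toReal (ENNReal.inv_ne_top.2 h0), ENNReal.ofReal_toReal hN]

lemma coefA {D w : ℝ≥0∞} (hD : 1 ≤ D) (hw : w ≤ 1) :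
    w * (w + D)⁻¹ + D * (w + 1)⁻¹ ≤ D := by
  have hwt : w + 1 ≠ ⊤ :=
    ENNReal.add_ne_top.2 ⟨(hw.trans_lt ENNReal.one_lt_top).ne, ENNReal.one_ne_top⟩
  have h1 : (w + D)⁻¹ ≤ (w + 1)⁻¹ := ENNReal.inv_le_inv' (by gcongr)
  calc w * (w+D)⁻¹ + D * (w+1)⁻¹ ≤ w * (w+1)⁻¹ + D * (w+1)⁻¹ := by gcongr
    _ = (w + D) * (w+1)⁻¹ := by rw [add_mul]
    _ ≤ (D * (w+1)) * (w+1)⁻¹ := by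
        refine mul_le_mul_left ?_ _
        rw [mul_add, mul_one]
        exact add_le_add (by calc w = 1 * w := (one_mul w).symm
                              _ ≤ D * w := mul_le_mul_left hD w) le_rfl
    _ = D * ((w+1) * (w+1)⁻¹) := by rw [mul_assoc]
    _ = D := by rw [ENNReal.mul_inv_cancel (by simp) hwt, mul_one]

lemma coefB {D w : ℝ≥0∞} (hD : 2 ≤ D) (hDt : D ≠ ⊤) (hw : w ≤ 1) :
    w * (w + D)⁻¹ + (w + 1)⁻¹ ≤ D := by
  have hwDt : w + D ≠ ⊤ :=
    ENNReal.add_ne_top.2 ⟨(hw.trans_lt ENNReal.one_lt_top).ne, hDt⟩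
  have h1 : w * (w + D)⁻¹ ≤ 1 := by
    calc w * (w+D)⁻¹ ≤ (w+D) * (w+D)⁻¹ := by gcongr; exact le_add_right le_rfl
      _ = 1 := ENNReal.mul_inv_cancel (by
          intro h0
          rw [add_eq_zero] at h0
          have := h0.2; subst this; simp at hD) hwDt
  have h2 : (w + 1)⁻¹ ≤ 1 := by rw [ENNReal.inv_le_one]; exact le_add_self
  calc w * (w + D)⁻¹ + (w + 1)⁻¹ ≤ 1 + 1 := add_le_add h1 h2
    _ = 2 := by norm_num
    _ ≤ D := hD

lemma two_le_pow {d : ℕ} (hd : 0 < d) : (2:ℝ≥0∞) ≤ 2^d := by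
  calc (2:ℝ≥0∞) = 2^1 := (pow_one 2).symm
    _ ≤ 2^d := pow_le_pow_right₀ one_le_two hd

lemma cluster_le {d : ℕ} (hd : 0 < d) (w : ℝ≥0∞) (hw : w ≤ 1) (a : ℝ≥0∞)
    (v : (Fin d → Bool) → ℝ≥0∞) :
    w * ((w + 2^d)⁻¹ * (w * a + ∑ ε : Fin d → Bool, v ε)) +
      ∑ ε : Fin d → Bool, (w + 1)⁻¹ * (w * a + v ε)
      ≤ 2^d * (w * a + ∑ ε : Fin d → Bool, v ε) := by
  have hD2 : (2:ℝ≥0∞) ≤ 2^d := two_le_pow hd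
  have hD1 : (1:ℝ≥0∞) ≤ 2^d := le_trans one_le_two hD2
  have hDt : (2:ℝ≥0∞)^d ≠ ⊤ := by
    exact ENNReal.pow_ne_top (by norm_num)
  have e1 : ∑ ε : Fin d → Bool, (w+1)⁻¹ * (w * a + v ε)
      = 2^d * ((w+1)⁻¹ * (w*a)) + (w+1)⁻¹ * ∑ ε : Fin d → Bool, v ε := by
    simp only [mul_add, Finset.sum_add_distrib, Finset.sum_const, Finset.card_univ,
      Fintype.card_fun, Fintype.card_bool, Fintype.card_fin, nsmul_eq_mul, Finset.mul_sum]
    congr 1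
    push_cast
    ring
  rw [e1]
  set S := ∑ ε : Fin d → Bool, v ε
  calc w * ((w + 2^d)⁻¹ * (w * a + S)) + (2^d * ((w+1)⁻¹ * (w*a)) + (w+1)⁻¹ * S)
      = (w*(w+2^d)⁻¹ + 2^d*(w+1)⁻¹) * (w*a) + (w*(w+2^d)⁻¹ + (w+1)⁻¹) * S := by ring
    _ ≤ 2^d * (w*a) + 2^d * S :=
        add_le_add (mul_le_mul_left (coefA hD1 hw) _)
          (mul_le_mul_left (coefB hD2 hDt hw) _)
    _ = 2^d * (w*a + S) := (mul_add _ _ _).symm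

lemma upper_bound {d : ℕ} (hd : 0 < d) (f : (Fin d → ℝ) → ℝ) :
    eLpNorm (avgOp (exMeasure d) 1 f) 1 (exMeasure d) ≤
      (2^d : ℝ≥0∞) * eLpNorm f 1 (exMeasure d) := by
  rw [eLpNorm_one_eq_lintegral_nnnorm, eLpNorm_one_eq_lintegral_nnnorm,
    lint_exMeasure, lint_exMeasure, ← ENNReal.tsum_mul_left]
  refine ENNReal.tsum_le_tsum fun m => ?_
  set w : ℝ≥0∞ := ((m:ℝ≥0∞)+1)⁻¹ with hwdef
  have hw : w ≤ 1 := by rw [hwdef, ENNReal.inv_le_one]; exact le_add_self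
  have hb : (‖avgOp (exMeasure d) 1 f (basePt d (m+1))‖₊ : ℝ≥0∞) ≤
      (w + 2^d)⁻¹ * (w * (‖f (basePt d (m+1))‖₊ : ℝ≥0∞) +
        ∑ ε : Fin d → Bool, (‖f (vertexPt d ε (m+1))‖₊ : ℝ≥0∞)) := by
    refine (nnnorm_avgOp_le _ _ _).trans (le_of_eq ?_)
    rw [measure_ball_base hd, setLint_ball_base hd]
  have hv : ∀ ε : Fin d → Bool, (‖avgOp (exMeasure d) 1 f (vertexPt d ε (m+1))‖₊ : ℝ≥0∞) ≤
      (w + 1)⁻¹ * (w * (‖f (basePt d (m+1))‖₊ : ℝ≥0∞) + (‖f (vertexPt d ε (m+1))‖₊ : ℝ≥0∞)) := by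
    intro ε
    refine (nnnorm_avgOp_le _ _ _).trans (le_of_eq ?_)
    rw [measure_ball_vertex hd, setLint_ball_vertex hd]
  calc w * (‖avgOp (exMeasure d) 1 f (basePt d (m+1))‖₊ : ℝ≥0∞) +
        ∑ ε : Fin d → Bool, (‖avgOp (exMeasure d) 1 f (vertexPt d ε (m+1))‖₊ : ℝ≥0∞)
      ≤ w * ((w + 2^d)⁻¹ * (w * (‖f (basePt d (m+1))‖₊ : ℝ≥0∞) +
          ∑ ε : Fin d → Bool, (‖f (vertexPt d ε (m+1))‖₊ : ℝ≥0∞))) +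
        ∑ ε : Fin d → Bool, (w + 1)⁻¹ * (w * (‖f (basePt d (m+1))‖₊ : ℝ≥0∞) +
          (‖f (vertexPt d ε (m+1))‖₊ : ℝ≥0∞)) :=
        add_le_add (mul_le_mul_right hb w) (Finset.sum_le_sum fun ε _ => hv ε)
    _ ≤ 2^d * (w * (‖f (basePt d (m+1))‖₊ : ℝ≥0∞) +
          ∑ ε : Fin d → Bool, (‖f (vertexPt d ε (m+1))‖₊ : ℝ≥0∞)) :=
        cluster_le hd w hw _ _


/-! ### exMeasure as a single sum of weighted Dirac measures -/

lemma exMeasure_eq_sum_dirac (d : ℕ) :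
    ∃ (g : ℕ → Fin d → ℝ) (c : ℕ → ℝ≥0∞),
      exMeasure d = Measure.sum fun n => c n • Measure.dirac (g n) := by
  haveI : Denumerable (ℕ × Option (Fin d → Bool)) := Denumerable.ofEncodableOfInfinite _
  set e : ℕ ≃ ℕ × Option (Fin d → Bool) :=
    (Denumerable.eqv (ℕ × Option (Fin d → Bool))).symm with he
  refine ⟨fun n => ((e n).2.elim (basePt d ((e n).1+1)) fun ε => vertexPt d ε ((e n).1+1)),
    fun n => ((e n).2.elim ((((e n).1:ℝ≥0∞))+1)⁻¹ fun _ => 1), ?_⟩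
  ext s hs
  rw [exMeasure, Measure.sum_apply _ hs, Measure.sum_apply _ hs]
  set F : ℕ → Option (Fin d → Bool) → ℝ≥0∞ := fun a o =>
    (o.elim (((a:ℝ≥0∞))+1)⁻¹ fun _ => 1) *
      Measure.dirac (o.elim (basePt d (a+1)) fun ε => vertexPt d ε (a+1)) s with hF
  have step1 : ∀ n : ℕ,
      (((((n:ℕ):ℝ≥0∞))+1)⁻¹ • Measure.dirac (basePt d (n+1)) +
        ∑ ε : Fin d → Bool, Measure.dirac (vertexPt d ε (n+1))) s = ∑' o, F n o := by
    intro n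
    rw [tsum_fintype, Fintype.sum_option]
    rw [Measure.add_apply, Measure.smul_apply, smul_eq_mul, Measure.finset_sum_apply]
    simp only [hF, Option.elim]
    congr 1
    exact Finset.sum_congr rfl fun ε _ => (one_mul _).symm
  have step2 : ∀ n : ℕ, ((((e n).2.elim ((((e n).1:ℝ≥0∞))+1)⁻¹ fun _ => 1) •
      Measure.dirac ((e n).2.elim (basePt d ((e n).1+1)) fun ε => vertexPt d ε ((e n).1+1))) s)
      = F (e n).1 (e n).2 := by
    intro n
    rw [Measure.smul_apply, smul_eq_mul]
  calc (∑' n : ℕ, (((((n:ℕ):ℝ≥0∞))+1)⁻¹ • Measure.dirac (basePt d (n+1)) +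
        ∑ ε : Fin d → Bool, Measure.dirac (vertexPt d ε (n+1))) s)
      = ∑' n : ℕ, ∑' o : Option (Fin d → Bool), F n o := tsum_congr step1
    _ = ∑' p : ℕ × Option (Fin d → Bool), F p.1 p.2 := ENNReal.tsum_prod.symm
    _ = ∑' n : ℕ, F (e n).1 (e n).2 := (Equiv.tsum_eq e fun p => F p.1 p.2).symm
    _ = _ := tsum_congr fun n => (step2 n).symm

/-! ### finiteness on bounded sets and nontriviality -/

lemma exMeasure_bounded {d : ℕ} (hd : 0 < d) {s : Set (Fin d → ℝ)}
    (hb : Bornology.IsBounded s) : exMeasure d s < ⊤ := by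
  obtain ⟨R, hR⟩ := hb.subset_closedBall 0
  refine lt_of_le_of_lt (measure_mono hR) ?_
  rw [← setLIntegral_one, setLint d measurableSet_closedBall]
  obtain ⟨N, hN⟩ := exists_nat_ge R
  have hout : ∀ x : Fin d → ℝ, R < x ⟨0, hd⟩ → x ∉ closedBall (0 : Fin d → ℝ) R := by
    intro x hx hmem
    rw [mem_closedBall] at hmem
    have h1 := (dist_le_pi_dist x 0 ⟨0, hd⟩).trans hmem
    rw [Real.dist_eq, Pi.zero_apply, sub_zero] at h1
    exact absurd ((le_abs_self _).trans h1) (not_le.2 hx)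
  have hvanish : ∀ m ∉ Finset.range N,
      (((m:ℝ≥0∞)+1)⁻¹ * (closedBall (0 : Fin d → ℝ) R).indicator (fun _ => (1:ℝ≥0∞)) (basePt d (m+1)) +
        ∑ ε : Fin d → Bool,
          (closedBall (0 : Fin d → ℝ) R).indicator (fun _ => (1:ℝ≥0∞)) (vertexPt d ε (m+1))) = 0 := by
    intro m hm
    rw [Finset.mem_range, not_lt] at hm
    have hmR : R ≤ (m:ℝ) := hN.trans (by exact_mod_cast hm)
    rw [Set.indicator_of_notMem (hout _ (by
      simp only [basePt, if_pos]
      push_cast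
      linarith [Nat.cast_nonneg (α := ℝ) m]))]
    rw [mul_zero, zero_add]
    refine Finset.sum_eq_zero fun ε _ => Set.indicator_of_notMem (hout _ (by
      simp only [vertexPt, if_pos]
      push_cast
      split_ifs <;> linarith [Nat.cast_nonneg (α := ℝ) m])) _
  rw [tsum_eq_sum hvanish]
  refine ENNReal.sum_lt_top.2 fun m _ => ?_
  have hind : ∀ x : Fin d → ℝ,
      (closedBall (0 : Fin d → ℝ) R).indicator (fun _ => (1:ℝ≥0∞)) x ≤ 1 := by
    intro x
    classical
    rw [Set.indicator_apply]
    split_ifs <;> simp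
  refine lt_of_le_of_lt (add_le_add
    (mul_le_mul' (by rw [ENNReal.inv_le_one]; exact le_add_self) (hind _))
    (Finset.sum_le_sum fun ε _ => hind _)) ?_
  rw [mul_one, sum_one_eq]
  exact ENNReal.add_lt_top.2 ⟨ENNReal.one_lt_top, ENNReal.pow_lt_top ENNReal.ofNat_lt_top⟩

lemma exMeasure_ne_zero {d : ℕ} (hd : 0 < d) : exMeasure d ≠ 0 := by
  intro h
  have h1 := measure_singleton_vertex hd 0 (fun _ => true)
  rw [h] at h1
  simp at h1

/-! ### the extremizing functions -/

noncomputable def fTest (d n : ℕ) : (Fin d → ℝ) → ℝ :=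
  fun x => if x = basePt d n then (n:ℝ) else 0

lemma fTest_eq_indicator (d n : ℕ) :
    fTest d n = Set.indicator {basePt d n} (fun _ => (n:ℝ)) := by
  funext x
  rw [Set.indicator_apply]
  simp [fTest, Set.mem_singleton_iff]

lemma integrable_fTest {d : ℕ} (hd : 0 < d) {n : ℕ} (hn : 1 ≤ n) :
    Integrable (fTest d n) (exMeasure d) := by
  obtain ⟨m, rfl⟩ : ∃ m, n = m + 1 := ⟨n - 1, by omega⟩
  rw [fTest_eq_indicator, integrable_indicator_iff (measurableSet_singleton _)]
  refine integrableOn_const (lt_top_iff_ne_top.1 ?_)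
  rw [measure_singleton_base hd]
  exact lt_of_le_of_lt (by rw [ENNReal.inv_le_one]; exact le_add_self) ENNReal.one_lt_top

lemma eLpNorm_fTest {d : ℕ} (hd : 0 < d) {n : ℕ} (hn : 1 ≤ n) :
    eLpNorm (fTest d n) 1 (exMeasure d) = 1 := by
  obtain ⟨m, rfl⟩ : ∃ m, n = m + 1 := ⟨n - 1, by omega⟩
  rw [eLpNorm_one_eq_lintegral_nnnorm, lint_exMeasure]
  rw [tsum_eq_single m]
  · have h1 : fTest d (m+1) (basePt d (m+1)) = ((m+1:ℕ):ℝ) := by simp [fTest]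
    have h2 : ∀ ε : Fin d → Bool, fTest d (m+1) (vertexPt d ε (m+1)) = 0 := fun ε => by
      simp [fTest, vertexPt_ne_basePt hd]
    rw [h1]
    rw [Finset.sum_eq_zero (fun ε _ => by rw [h2]; simp), add_zero]
    have h3 : ((‖((m+1:ℕ):ℝ)‖₊ : ℝ≥0∞)) = ((m+1:ℕ):ℝ≥0∞) := by
      rw [← ofReal_norm_eq_coe_nnnorm, Real.norm_of_nonneg (by positivity),
        ENNReal.ofReal_natCast]
    rw [h3]
    rw [show (((m+1:ℕ)):ℝ≥0∞) = ((m:ℝ≥0∞)+1) by push_cast; ring]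
    exact ENNReal.inv_mul_cancel (by simp) (by simp)
  · intro k hk
    have h1 : fTest d (m+1) (basePt d (k+1)) = 0 := by
      rw [fTest]
      rw [if_neg (fun hmem => hk (by have := (basePt_inj hd).1 hmem; omega))]
    have h2 : ∀ ε : Fin d → Bool, fTest d (m+1) (vertexPt d ε (k+1)) = 0 := fun ε => by
      simp [fTest, vertexPt_ne_basePt hd]
    rw [h1]
    rw [Finset.sum_eq_zero (fun ε _ => by rw [h2]; simp)]
    simp

lemma setInt_fTest {d : ℕ} (m : ℕ) (x : Fin d → ℝ) :
    ∫ y in closedBall x 1, fTest d (m+1) y ∂(exMeasure d)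
      = (exMeasure d ({basePt d (m+1)} ∩ closedBall x 1)).toReal * ((m+1:ℕ):ℝ) := by
  rw [fTest_eq_indicator]
  rw [integral_indicator_const ((m+1:ℕ):ℝ) (measurableSet_singleton _)]
  rw [measureReal_def, Measure.restrict_apply (measurableSet_singleton _), smul_eq_mul]

lemma avg_base {d : ℕ} (hd : 0 < d) (m : ℕ) :
    avgOp (exMeasure d) 1 (fTest d (m+1)) (basePt d (m+1))
      = ((((m:ℝ≥0∞)+1)⁻¹ + 2^d).toReal)⁻¹ := by
  rw [avgOp, setInt_fTest, measure_ball_base hd]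
  have hinter : {basePt d (m+1)} ∩ closedBall (basePt d (m+1)) 1 = {basePt d (m+1)} :=
    Set.inter_eq_left.2 (Set.singleton_subset_iff.2 (mem_closedBall_self one_pos.le))
  rw [hinter, measure_singleton_base hd, ENNReal.toReal_inv]
  have h1 : ((m:ℝ≥0∞)+1).toReal = (m:ℝ)+1 := by
    rw [ENNReal.toReal_add (by simp) (by simp)]; simp
  rw [h1]
  have h2 : ((m:ℝ)+1)⁻¹ * ((m+1:ℕ):ℝ) = 1 := by
    push_cast
    field_simp
  rw [h2, mul_one]

lemma avg_vertex {d : ℕ} (hd : 0 < d) (m : ℕ) (ε : Fin d → Bool) :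
    avgOp (exMeasure d) 1 (fTest d (m+1)) (vertexPt d ε (m+1))
      = ((((m:ℝ≥0∞)+1)⁻¹ + 1).toReal)⁻¹ := by
  rw [avgOp, setInt_fTest, measure_ball_vertex hd]
  have hinter : {basePt d (m+1)} ∩ closedBall (vertexPt d ε (m+1)) 1 = {basePt d (m+1)} :=
    Set.inter_eq_left.2 (Set.singleton_subset_iff.2 ((base_mem_ball_vertex hd).2 rfl))
  rw [hinter, measure_singleton_base hd, ENNReal.toReal_inv]
  have h1 : ((m:ℝ≥0∞)+1).toReal = (m:ℝ)+1 := by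
    rw [ENNReal.toReal_add (by simp) (by simp)]; simp
  rw [h1]
  have h2 : ((m:ℝ)+1)⁻¹ * ((m+1:ℕ):ℝ) = 1 := by
    push_cast
    field_simp
  rw [h2, mul_one]

lemma avg_base_ne {d : ℕ} (hd : 0 < d) {k m : ℕ} (hk : k ≠ m) :
    avgOp (exMeasure d) 1 (fTest d (m+1)) (basePt d (k+1)) = 0 := by
  rw [avgOp, setInt_fTest]
  rw [Set.singleton_inter_eq_empty.2 (fun hmem => hk
    (by have := (base_mem_ball_base hd).1 hmem; omega))]
  simp

lemma avg_vertex_ne {d : ℕ} (hd : 0 < d) {k m : ℕ} (hk : k ≠ m) (ε : Fin d → Bool) :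
    avgOp (exMeasure d) 1 (fTest d (m+1)) (vertexPt d ε (k+1)) = 0 := by
  rw [avgOp, setInt_fTest]
  rw [Set.singleton_inter_eq_empty.2 (fun hmem => hk
    (by have := (base_mem_ball_vertex hd).1 hmem; omega))]
  simp



lemma lower_bound {d : ℕ} (hd : 0 < d) {n : ℕ} (hn : 1 ≤ n) :
    (2^d : ℝ≥0∞) * n / (n+1)
      < eLpNorm (avgOp (exMeasure d) 1 (fTest d n)) 1 (exMeasure d) := by
  obtain ⟨m, rfl⟩ : ∃ m, n = m + 1 := ⟨n - 1, by omega⟩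
  rw [eLpNorm_one_eq_lintegral_nnnorm, lint_exMeasure]
  refine lt_of_lt_of_le ?_ (ENNReal.le_tsum m)
  rw [avg_base hd]
  rw [Finset.sum_congr rfl (fun ε _ => by rw [avg_vertex hd])]
  rw [Finset.sum_const, Finset.card_univ, Fintype.card_fun, Fintype.card_bool,
    Fintype.card_fin, nsmul_eq_mul]
  have hmne : ((m:ℝ≥0∞)+1) ≠ 0 := by simp
  have hmtop : ((m:ℝ≥0∞)+1) ≠ ⊤ := ENNReal.add_ne_top.2 ⟨ENNReal.natCast_ne_top m, ENNReal.one_ne_top⟩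
  have hinvtop : ((m:ℝ≥0∞)+1)⁻¹ ≠ ⊤ := ENNReal.inv_ne_top.2 hmne
  have htoR : ((m:ℝ≥0∞)+1).toReal = (m:ℝ)+1 := by
    rw [ENNReal.toReal_add (ENNReal.natCast_ne_top m) ENNReal.one_ne_top]; simp
  have hY : ((‖((((m:ℝ≥0∞)+1)⁻¹ + 1).toReal)⁻¹‖₊ : ℝ≥0∞))
      = ((m+1:ℕ):ℝ≥0∞) / ((m+2:ℕ):ℝ≥0∞) := by
    rw [ENNReal.toReal_add hinvtop ENNReal.one_ne_top, ENNReal.toReal_inv, htoR,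
      ENNReal.toReal_one]
    rw [show ((m:ℝ)+1)⁻¹ + 1 = ((m:ℝ)+2)/((m:ℝ)+1) by field_simp; ring]
    rw [inv_div]
    rw [← ofReal_norm_eq_coe_nnnorm, Real.norm_of_nonneg (by positivity)]
    rw [ENNReal.ofReal_div_of_pos (by positivity)]
    rw [show (m:ℝ)+1 = ((m+1:ℕ):ℝ) by push_cast; ring]
    rw [show (m:ℝ)+2 = ((m+2:ℕ):ℝ) by push_cast; ring]
    rw [ENNReal.ofReal_natCast, ENNReal.ofReal_natCast]
  rw [hY]
  have hLHS : (2^d : ℝ≥0∞) * ((m+1:ℕ):ℝ≥0∞) / (((m+1:ℕ):ℝ≥0∞)+1)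
      = ((2^d : ℕ):ℝ≥0∞) * (((m+1:ℕ):ℝ≥0∞) / ((m+2:ℕ):ℝ≥0∞)) := by
    rw [mul_div_assoc]
    congr 1
    · push_cast; ring
    · congr 1; push_cast; ring
  rw [hLHS]
  refine lt_of_lt_of_le (ENNReal.lt_add_right ?_ ?_) (le_of_eq (add_comm _ _))
  · refine ENNReal.mul_ne_top (by push_cast; exact ENNReal.pow_ne_top (by norm_num)) ?_
    exact (ENNReal.div_lt_top (ENNReal.natCast_ne_top _) (by simp)).ne
  · refine mul_ne_zero (ENNReal.inv_ne_zero.2 hmtop) ?_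
    have hXpos : 0 < ((((m:ℝ≥0∞)+1)⁻¹ + 2^d).toReal)⁻¹ := by
      have h0 : (((m:ℝ≥0∞)+1)⁻¹ + (2:ℝ≥0∞)^d) ≠ 0 := by
        intro h
        rw [add_eq_zero] at h
        exact pow_ne_zero d (by norm_num : (2:ℝ≥0∞) ≠ 0) h.2
      have htop : (((m:ℝ≥0∞)+1)⁻¹ + (2:ℝ≥0∞)^d) ≠ ⊤ :=
        ENNReal.add_ne_top.2 ⟨hinvtop, ENNReal.pow_ne_top (by norm_num)⟩
      exact inv_pos.2 (ENNReal.toReal_pos h0 htop)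
    simpa using hXpos.ne'

lemma exists_good_n {d : ℕ} {c : ℝ≥0∞} (hc : c < 2^d) :
    ∃ n : ℕ, 1 ≤ n ∧ c ≤ (2^d : ℝ≥0∞) * n / (n+1) := by
  have hDt : (2:ℝ≥0∞)^d ≠ ⊤ := ENNReal.pow_ne_top (by norm_num)
  have hct : c ≠ ⊤ := (hc.trans_le le_top).ne
  set r := c.toReal with hr_def
  have hr : r < 2^d := by
    have h := (ENNReal.toReal_lt_toReal hct hDt).2 hc
    rw [ENNReal.toReal_pow] at h
    simpa using h
  obtain ⟨n₁, hn₁⟩ := exists_nat_ge (r / (2^d - r))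
  refine ⟨n₁ + 1, by omega, ?_⟩
  set n := n₁ + 1 with hn_def
  have hrn : r * ((n:ℝ)+1) ≤ 2^d * n := by
    have hpos : (0:ℝ) < 2^d - r := by linarith
    have h2 : r / (2^d - r) ≤ (n:ℝ) := hn₁.trans (by push_cast [hn_def]; linarith)
    have h3 : r ≤ (n:ℝ) * (2^d - r) := by
      rw [div_le_iff₀ hpos] at h2; linarith
    have hr0 : 0 ≤ r := ENNReal.toReal_nonneg
    nlinarith
  rw [ENNReal.le_div_iff_mul_le (Or.inl (by simp))
    (Or.inl (ENNReal.add_ne_top.2 ⟨ENNReal.natCast_ne_top _, ENNReal.one_ne_top⟩))]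
  have e1 : c * ((n:ℝ≥0∞)+1) = ENNReal.ofReal (r * ((n:ℝ)+1)) := by
    rw [ENNReal.ofReal_mul ENNReal.toReal_nonneg, ENNReal.ofReal_toReal hct]
    congr 1
    rw [show (n:ℝ)+1 = ((n+1:ℕ):ℝ) by push_cast; ring, ENNReal.ofReal_natCast]
    push_cast; ring
  have e2 : (2^d : ℝ≥0∞) * (n:ℝ≥0∞) = ENNReal.ofReal ((2^d : ℝ) * n) := by
    rw [ENNReal.ofReal_mul (by positivity), ENNReal.ofReal_natCast]
    congr 1
    rw [show ((2:ℝ))^d = (((2^d : ℕ)):ℝ) by push_cast; ring, ENNReal.ofReal_natCast]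
    push_cast; ring
  rw [e1, e2]
  exact ENNReal.ofReal_le_ofReal hrn


/-- There is a purely atomic measure on `ℝ^d` with the sup norm, finite on bounded
sets and nonzero, for which the averaging operator `A₁` over closed unit balls has
`L¹` operator norm exactly `2^d`; in particular one may take the explicit measure
`exMeasure d`, and then the functions `fₙ = n ⬝ 1_{3n e₁}` satisfy `‖fₙ‖₁ = 1` and
`‖A₁ fₙ‖₁ > 2^d n/(n+1)`. -/
theorem stmt12 (d : ℕ) (hd : 0 < d) :
    ∃ μ : Measure (Fin d → ℝ),
      (∃ (g : ℕ → Fin d → ℝ) (c : ℕ → ℝ≥0∞),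
        μ = Measure.sum fun n => c n • Measure.dirac (g n)) ∧
      (∀ s : Set (Fin d → ℝ), Bornology.IsBounded s → μ s < ⊤) ∧
      μ ≠ 0 ∧
      (∀ f : (Fin d → ℝ) → ℝ, Integrable f μ →
        eLpNorm (avgOp μ 1 f) 1 μ ≤ (2 ^ d : ℝ≥0∞) * eLpNorm f 1 μ) ∧
      (∀ c : ℝ≥0∞, c < (2 ^ d : ℝ≥0∞) → ∃ f : (Fin d → ℝ) → ℝ,
        Integrable f μ ∧ c * eLpNorm f 1 μ < eLpNorm (avgOp μ 1 f) 1 μ) ∧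
      μ = exMeasure d ∧
      (∀ n : ℕ, 1 ≤ n →
        eLpNorm (fun x => if x = basePt d n then (n : ℝ) else 0) 1 μ = 1 ∧
        (2 ^ d : ℝ≥0∞) * n / (n + 1) <
          eLpNorm (avgOp μ 1 fun x => if x = basePt d n then (n : ℝ) else 0) 1 μ) := by
  refine ⟨exMeasure d, exMeasure_eq_sum_dirac d, fun s hs => exMeasure_bounded hd hs,
    exMeasure_ne_zero hd, fun f _ => upper_bound hd f, ?_, rfl,
    fun n hn => ⟨eLpNorm_fTest hd hn, lower_bound hd hn⟩⟩
  intro c hc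
  obtain ⟨n, hn1, hn2⟩ := exists_good_n hc
  exact ⟨fTest d n, integrable_fTest hd hn1, by
    rw [eLpNorm_fTest hd hn1, mul_one]
    exact lt_of_le_of_lt hn2 (lower_bound hd hn1)⟩
end
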